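/- Let p < q be distinct primes and write Φ_{pq}(x) = Σ_m d_m x^m. Every coefficient d_m with 0 ≤ m ≤ φ(pq) belongs to {−1, 0, 1}; moreover, the number of indices m with d_m = 1 equals p_q*·q_p*, the number of indices m with d_m = −1 equals (q − p_q*)(p − q_p*), and these two counts differ by exactly 1. (Lam–Leung, counting part.) -/
import Mathlib

open Polynomial Finset

lemma cyc_id (p q : ℕ) (hp : p.Prime) (hq : q.Prime) (hpq : p < q) :
    cyclotomic (p*q) ℤ * ((X^p - 1) * (X^q - 1)) = (X^(p*q) - 1) * (X - 1) := by
  have h1p : 1 < p := hp.one_lt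
  have h1q : 1 < q := hq.one_lt
  have hppq : p < p * q := by nlinarith
  have hqpq : q < p * q := by nlinarith
  have hdiv : (p*q).divisors = {1, p, q, p*q} := by
    rw [Nat.divisors_mul, hp.divisors, hq.divisors]
    ext k
    simp only [Finset.mem_mul, Finset.mem_insert, Finset.mem_singleton]
    aesop
  have hXp : (X - 1 : ℤ[X]) * cyclotomic p ℤ = X^p - 1 := by
    rw [← prod_cyclotomic_eq_X_pow_sub_one hp.pos ℤ, hp.divisors,
      Finset.prod_insert (by simp [h1p.ne]), Finset.prod_singleton, cyclotomic_one]
  have hXq : (X - 1 : ℤ[X]) * cyclotomic q ℤ = X^q - 1 := by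
    rw [← prod_cyclotomic_eq_X_pow_sub_one hq.pos ℤ, hq.divisors,
      Finset.prod_insert (by simp [h1q.ne]), Finset.prod_singleton, cyclotomic_one]
  have hprod : (X - 1 : ℤ[X]) * cyclotomic p ℤ * cyclotomic q ℤ * cyclotomic (p*q) ℤ
      = X^(p*q) - 1 := by
    rw [← prod_cyclotomic_eq_X_pow_sub_one (by positivity) ℤ, hdiv,
      Finset.prod_insert (by simp [h1p.ne, h1q.ne, (h1p.trans hppq).ne]),
      Finset.prod_insert (by simp [hpq.ne, hppq.ne]),
      Finset.prod_insert (by simp [hqpq.ne]), Finset.prod_singleton, cyclotomic_one]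
    ring
  rw [← hXp, ← hXq, ← hprod]; ring

section
variable (p q pqs qps : ℕ)

noncomputable def Pol : ℤ[X] :=
  ∑ x ∈ (range pqs) ×ˢ (range qps), X^(p*x.1 + q*x.2)

noncomputable def Nol : ℤ[X] :=
  ∑ x ∈ (Ico pqs q) ×ˢ (Ico qps p), X^(p*x.1 + q*x.2 - p*q)

end

lemma key_eq (p q pqs qps : ℕ) (hp : p.Prime) (hq : q.Prime) (hpq : p < q)
    (hpqs1 : 0 < pqs) (hpqs2 : pqs < q) (hpqs3 : p * pqs ≡ 1 [MOD q])
    (hqps1 : 0 < qps) (hqps2 : qps < p) (hqps3 : q * qps ≡ 1 [MOD p]) :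
    p * pqs + q * qps = p * q + 1 := by
  have hco : Nat.Coprime p q := (Nat.coprime_primes hp hq).mpr hpq.ne
  have h1 : p * pqs + q * qps ≡ 1 [MOD q] := by
    have : q * qps ≡ 0 [MOD q] := (Nat.modEq_zero_iff_dvd).mpr (dvd_mul_right q qps)
    simpa using hpqs3.add this
  have h2 : p * pqs + q * qps ≡ 1 [MOD p] := by
    have : p * pqs ≡ 0 [MOD p] := (Nat.modEq_zero_iff_dvd).mpr (dvd_mul_right p pqs)
    simpa [Nat.add_comm] using this.add hqps3
  have h3 : p * pqs + q * qps ≡ 1 [MOD p * q] :=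
    (Nat.modEq_and_modEq_iff_modEq_mul hco).mp ⟨h2, h1⟩
  have hdvd : p * q ∣ (p * pqs + q * qps - 1) := by
    have := (Nat.modEq_iff_dvd' (by nlinarith)).mp h3.symm
    simpa using this
  have hne : p * pqs + q * qps - 1 ≠ 0 := by
    have : 1 ≤ p * pqs := Nat.one_le_iff_ne_zero.mpr (Nat.mul_ne_zero hp.ne_zero hpqs1.ne')
    have : 1 ≤ q * qps := Nat.one_le_iff_ne_zero.mpr (Nat.mul_ne_zero hq.ne_zero hqps1.ne')
    omega
  have hlt : p * pqs + q * qps - 1 < 2 * (p * q) := by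
    have h1 : p * pqs ≤ p * (q - 1) := Nat.mul_le_mul_left p (by omega)
    have h2 : q * qps ≤ q * (p - 1) := Nat.mul_le_mul_left q (by omega)
    have hp1 : 1 ≤ p := hp.one_le
    have hq1 : 1 ≤ q := hq.one_le
    have e1 : p * (q-1) = p*q - p := by rw [Nat.mul_sub_one]
    have e2 : q * (p-1) = q*p - q := by rw [Nat.mul_sub_one]
    have : q * p = p * q := Nat.mul_comm q p
    have hppq : p ≤ p * q := Nat.le_mul_of_pos_right p hq.pos
    have hqpq : q ≤ p * q := Nat.le_mul_of_pos_left q hp.pos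
    omega
  have := Nat.eq_of_dvd_of_lt_two_mul hne hdvd hlt
  omega

lemma main_id (p q pqs qps : ℕ) (hp : p.Prime) (hq : q.Prime) (hpq : p < q)
    (hpqs2 : pqs < q) (hqps2 : qps < p)
    (hkey : p * pqs + q * qps = p * q + 1) :
    Pol p q pqs qps - Nol p q pqs qps = cyclotomic (p * q) ℤ := by
  have hM : ((X^p - 1) * (X^q - 1) : ℤ[X]) ≠ 0 := by
    have h1 : (X^p - 1 : ℤ[X]) ≠ 0 := fun h => by
      simpa [zero_pow hp.ne_zero] using congrArg (eval 0) h
    have h2 : (X^q - 1 : ℤ[X]) ≠ 0 := fun h => by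
      simpa [zero_pow hq.ne_zero] using congrArg (eval 0) h
    exact mul_ne_zero h1 h2
  set A : ℤ[X] := ∑ i ∈ range pqs, X^(p*i) with hAdef
  set B : ℤ[X] := ∑ j ∈ range qps, X^(q*j) with hBdef
  set C : ℤ[X] := ∑ i ∈ Ico pqs q, X^(p*i) with hCdef
  set D : ℤ[X] := ∑ j ∈ Ico qps p, X^(q*j) with hDdef
  have hA : A * (X^p - 1) = X^(p*pqs) - 1 := by
    rw [hAdef]; simp_rw [pow_mul]; exact geom_sum_mul _ _
  have hAq : (∑ i ∈ range q, (X:ℤ[X])^(p*i)) * (X^p - 1) = X^(p*q) - 1 := by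
    simp_rw [pow_mul]; exact geom_sum_mul _ _
  have hB : B * (X^q - 1) = X^(q*qps) - 1 := by
    rw [hBdef]; simp_rw [pow_mul]; exact geom_sum_mul _ _
  have hBp : (∑ j ∈ range p, (X:ℤ[X])^(q*j)) * (X^q - 1) = X^(q*p) - 1 := by
    simp_rw [pow_mul]; exact geom_sum_mul _ _
  have hC : C * (X^p - 1) = X^(p*q) - X^(p*pqs) := by
    rw [hCdef, Finset.sum_Ico_eq_sub _ (le_of_lt hpqs2), sub_mul, hAq, hA]
    ring
  have hD : D * (X^q - 1) = X^(q*p) - X^(q*qps) := by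
    rw [hDdef, Finset.sum_Ico_eq_sub _ (le_of_lt hqps2), sub_mul, hBp, hB]
    ring
  have hPAB : Pol p q pqs qps = A * B := by
    rw [Pol, Finset.sum_product, Finset.sum_mul_sum]
    simp_rw [← pow_add]
  have hN : (X:ℤ[X])^(p*q) * Nol p q pqs qps = C * D := by
    rw [Nol, Finset.mul_sum, Finset.sum_product, Finset.sum_mul_sum]
    refine Finset.sum_congr rfl fun i hi => Finset.sum_congr rfl fun j hj => ?_
    rw [← pow_add, ← pow_add]
    congr 1
    rw [Finset.mem_Ico] at hi hj
    have h1 : p*pqs ≤ p*i := Nat.mul_le_mul_left p hi.1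
    have h2 : q*qps ≤ q*j := Nat.mul_le_mul_left q hj.1
    have h3 : p*q ≤ p*i + q*j := by
      calc p*q ≤ p*q + 1 := Nat.le_succ _
        _ = p*pqs + q*qps := hkey.symm
        _ ≤ p*i + q*j := add_le_add h1 h2
    exact Nat.add_sub_cancel' h3
  have hcyc := cyc_id p q hp hq hpq
  refine mul_right_cancel₀ hM ?_
  rw [hcyc]
  refine mul_left_cancel₀ (pow_ne_zero (p*q) (X_ne_zero : (X:ℤ[X]) ≠ 0)) ?_
  calc X^(p*q) * ((Pol p q pqs qps - Nol p q pqs qps) * ((X^p-1)*(X^q-1)))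
      = (A * (X^p-1)) * (B * (X^q-1)) * X^(p*q)
        - ((X^(p*q) * Nol p q pqs qps) * ((X^p-1)*(X^q-1))) := by rw [hPAB]; ring
    _ = (X^(p*pqs) - 1) * (X^(q*qps) - 1) * X^(p*q)
        - (C * (X^p-1)) * (D * (X^q-1)) := by rw [hA, hB, hN]; ring
    _ = (X^(p*pqs) - 1) * (X^(q*qps) - 1) * X^(p*q)
        - (X^(p*q) - X^(p*pqs)) * (X^(q*p) - X^(q*qps)) := by rw [hC, hD]
    _ = X^(p*q) * ((X^(p*q) - 1) * (X - 1)) := by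
        have e1 : (X:ℤ[X])^(p*pqs) * X^(q*qps) = X^(p*q) * X := by
          rw [← pow_add, hkey, pow_add, pow_one]
        have e2 : q * p = p * q := Nat.mul_comm q p
        rw [e2]
        linear_combination (X^(p*q) - 1) * e1

/-- **Lam–Leung, counting part**: for distinct primes `p < q`, every coefficient of
`Φ_{pq}` lies in `{-1, 0, 1}`; the number of indices `m` in `[0, φ(pq)]` with
coefficient `1` is `p_q* · q_p*`, the number with coefficient `-1` is
`(q − p_q*)(p − q_p*)`, and these counts differ by exactly `1`. -/
theorem lam_leung_count (p q pqs qps : ℕ) (hp : p.Prime) (hq : q.Prime) (hpq : p < q)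
    (hpqs1 : 0 < pqs) (hpqs2 : pqs < q) (hpqs3 : p * pqs ≡ 1 [MOD q])
    (hqps1 : 0 < qps) (hqps2 : qps < p) (hqps3 : q * qps ≡ 1 [MOD p]) :
    (∀ m ≤ Nat.totient (p * q),
        (Polynomial.cyclotomic (p * q) ℤ).coeff m ∈ ({-1, 0, 1} : Set ℤ)) ∧
    ((Finset.range (Nat.totient (p * q) + 1)).filter
        (fun m => (Polynomial.cyclotomic (p * q) ℤ).coeff m = 1)).card = pqs * qps ∧
    ((Finset.range (Nat.totient (p * q) + 1)).filter
        (fun m => (Polynomial.cyclotomic (p * q) ℤ).coeff m = -1)).card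
      = (q - pqs) * (p - qps) ∧
    pqs * qps = (q - pqs) * (p - qps) + 1 := by
  have hkey := key_eq p q pqs qps hp hq hpq hpqs1 hpqs2 hpqs3 hqps1 hqps2 hqps3
  have hF := main_id p q pqs qps hp hq hpq hpqs2 hqps2 hkey
  have hco : Nat.Coprime p q := (Nat.coprime_primes hp hq).mpr hpq.ne
  have htot : Nat.totient (p*q) = (p-1)*(q-1) := by
    rw [Nat.totient_mul hco, Nat.totient_prime hp, Nat.totient_prime hq]
  -- mod-q injectivity helper
  have modq_inj : ∀ a b x y : ℕ, a < q → b < q → q ∣ x → q ∣ y →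
      p*a + x = p*b + y → a = b := by
    intro a b x y ha hb hx hy h
    have h1 : p*a ≡ p*b [MOD q] := by
      calc p*a ≡ p*a + x [MOD q] := by
            simpa using (Nat.ModEq.refl (p*a)).add ((Nat.modEq_zero_iff_dvd).mpr hx).symm
        _ = p*b + y := h
        _ ≡ p*b [MOD q] := by
            simpa using (Nat.ModEq.refl (p*b)).add ((Nat.modEq_zero_iff_dvd).mpr hy)
    have h2 : a ≡ b [MOD q] := by
      calc a = 1 * a := (one_mul a).symm
        _ ≡ (p*pqs) * a [MOD q] := (hpqs3.symm.mul_right a)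
        _ = pqs * (p*a) := by ring
        _ ≡ pqs * (p*b) [MOD q] := h1.mul_left pqs
        _ = (p*pqs) * b := by ring
        _ ≡ 1 * b [MOD q] := hpqs3.mul_right b
        _ = b := one_mul b
    exact h2.eq_of_lt_of_lt ha hb
  have inj : ∀ i j i' j' : ℕ, i < q → i' < q →
      p*i + q*j = p*i' + q*j' → i = i' ∧ j = j' := by
    intro i j i' j' hi hi' h
    have hii : i = i' := modq_inj i i' (q*j) (q*j') hi hi' ⟨j, rfl⟩ ⟨j', rfl⟩ h
    subst hii
    have h2 : q*j = q*j' := Nat.add_left_cancel h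
    exact ⟨rfl, Nat.eq_of_mul_eq_mul_left hq.pos h2⟩
  have hge2 : ∀ i' j', pqs ≤ i' → qps ≤ j' → p*q + 1 ≤ p*i' + q*j' := by
    intro i' j' h1 h2
    calc p*q+1 = p*pqs + q*qps := hkey.symm
      _ ≤ p*i' + q*j' := add_le_add (Nat.mul_le_mul_left p h1) (Nat.mul_le_mul_left q h2)
  have hdisj0 : ∀ i j i' j', i < q → pqs ≤ i' → i' < q → qps ≤ j' → j' < p →
      p*i + q*j ≠ p*i' + q*j' - p*q := by
    intro i j i' j' hi hi'1 hi'2 hj'1 hj'2 h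
    have hge := hge2 i' j' hi'1 hj'1
    have h2 : p*i + (q*j + p*q) = p*i' + q*j' := by
      rw [← Nat.add_assoc, h, Nat.sub_add_cancel (Nat.le_of_succ_le hge)]
    have hii : i = i' := modq_inj i i' (q*j + p*q) (q*j') hi hi'2
      (Dvd.dvd.add ⟨j, rfl⟩ ⟨p, Nat.mul_comm p q⟩) ⟨j', rfl⟩ h2
    subst hii
    have h3 : q*j + p*q = q*j' := Nat.add_left_cancel h2
    have h4 : q * (j + p) = q * j' := by rw [Nat.mul_add, Nat.mul_comm q p]; exact h3
    have := Nat.eq_of_mul_eq_mul_left hq.pos h4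
    omega
  -- coefficient formula
  have hcoeff : ∀ m, (cyclotomic (p*q) ℤ).coeff m
      = (((range pqs ×ˢ range qps).filter (fun x => m = p*x.1 + q*x.2)).card : ℤ)
      - (((Ico pqs q ×ˢ Ico qps p).filter (fun x => m = p*x.1 + q*x.2 - p*q)).card : ℤ) := by
    intro m
    rw [← hF, Pol, Nol, coeff_sub, finset_sum_coeff, finset_sum_coeff]
    simp_rw [coeff_X_pow]
    rw [Finset.sum_boole, Finset.sum_boole]
  have hn1 : ∀ m, ((range pqs ×ˢ range qps).filter (fun x => m = p*x.1 + q*x.2)).card ≤ 1 := by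
    intro m
    refine Finset.card_le_one.mpr fun a ha b hb => ?_
    simp only [Finset.mem_filter, Finset.mem_product, Finset.mem_range] at ha hb
    have h := inj a.1 a.2 b.1 b.2 (ha.1.1.trans hpqs2) (hb.1.1.trans hpqs2)
      (ha.2.symm.trans hb.2)
    exact Prod.ext h.1 h.2
  have hn2 : ∀ m, ((Ico pqs q ×ˢ Ico qps p).filter
      (fun x => m = p*x.1 + q*x.2 - p*q)).card ≤ 1 := by
    intro m
    refine Finset.card_le_one.mpr fun a ha b hb => ?_
    simp only [Finset.mem_filter, Finset.mem_product, Finset.mem_Ico] at ha hb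
    have hgea := hge2 a.1 a.2 ha.1.1.1 ha.1.2.1
    have hgeb := hge2 b.1 b.2 hb.1.1.1 hb.1.2.1
    have heq : p*a.1 + q*a.2 = p*b.1 + q*b.2 := by
      have h1 : p*a.1 + q*a.2 - p*q = p*b.1 + q*b.2 - p*q := ha.2.symm.trans hb.2
      have h2 : p*a.1 + q*a.2 - p*q + p*q = p*b.1 + q*b.2 - p*q + p*q := by rw [h1]
      rwa [Nat.sub_add_cancel (Nat.le_of_succ_le hgea),
        Nat.sub_add_cancel (Nat.le_of_succ_le hgeb)] at h2
    have h := inj a.1 a.2 b.1 b.2 ha.1.1.2 hb.1.1.2 heq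
    exact Prod.ext h.1 h.2
  have hdisj : ∀ m, ((range pqs ×ˢ range qps).filter (fun x => m = p*x.1 + q*x.2)).card = 0
      ∨ ((Ico pqs q ×ˢ Ico qps p).filter (fun x => m = p*x.1 + q*x.2 - p*q)).card = 0 := by
    intro m
    by_contra hc
    push_neg at hc
    obtain ⟨h1, h2⟩ := hc
    obtain ⟨a, ha⟩ := Finset.card_pos.mp (Nat.pos_of_ne_zero h1)
    obtain ⟨b, hb⟩ := Finset.card_pos.mp (Nat.pos_of_ne_zero h2)
    simp only [Finset.mem_filter, Finset.mem_product, Finset.mem_range, Finset.mem_Ico] at ha hb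
    exact hdisj0 a.1 a.2 b.1 b.2 (ha.1.1.trans hpqs2) hb.1.1.1 hb.1.1.2 hb.1.2.1 hb.1.2.2
      (ha.2.symm.trans hb.2)
  -- bounds
  have h3 : (p-1)*(q-1) + p + q = p*q + 1 := by
    obtain ⟨p', rfl⟩ : ∃ p', p = p'+1 := ⟨p-1, by omega⟩
    obtain ⟨q', rfl⟩ : ∃ q', q = q'+1 := ⟨q-1, by omega⟩
    simp only [Nat.add_sub_cancel]
    ring
  have hb1 : ∀ i j, i < pqs → j < qps → p*i + q*j ≤ (p-1)*(q-1) := by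
    intro i j hi hj
    have h1 := Nat.mul_le_mul_left p (Nat.succ_le_of_lt hi)
    have h2 := Nat.mul_le_mul_left q (Nat.succ_le_of_lt hj)
    rw [Nat.mul_succ] at h1 h2
    linarith
  have hb2 : ∀ i j, i < q → j < p → p*i + q*j - p*q ≤ (p-1)*(q-1) := by
    intro i j hi hj
    have h1 := Nat.mul_le_mul_left p (Nat.succ_le_of_lt hi)
    have h2 := Nat.mul_le_mul_left q (Nat.succ_le_of_lt hj)
    rw [Nat.mul_succ] at h1 h2
    have hqp : q*p = p*q := Nat.mul_comm q p
    rw [Nat.sub_le_iff_le_add]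
    linarith
  refine ⟨?_, ?_, ?_, ?_⟩
  · intro m hm
    simp only [Set.mem_insert_iff, Set.mem_singleton_iff]
    rw [hcoeff m]
    have := hn1 m; have := hn2 m
    omega
  · have himg1 : (Finset.range (Nat.totient (p*q) + 1)).filter
        (fun m => (cyclotomic (p*q) ℤ).coeff m = 1)
        = (range pqs ×ˢ range qps).image (fun x => p*x.1 + q*x.2) := by
      ext m
      simp only [Finset.mem_filter, Finset.mem_range, Finset.mem_image]
      constructor
      · rintro ⟨hm, hc⟩
        rw [hcoeff m] at hc
        have h1 := hn1 m; have h2 := hn2 m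
        obtain ⟨x, hx⟩ := Finset.card_pos.mp
          (show 0 < ((range pqs ×ˢ range qps).filter (fun x => m = p*x.1 + q*x.2)).card
            by omega)
        rw [Finset.mem_filter] at hx
        exact ⟨x, hx.1, hx.2.symm⟩
      · rintro ⟨x, hx, rfl⟩
        rw [Finset.mem_product, Finset.mem_range, Finset.mem_range] at hx
        have hmem : x ∈ (range pqs ×ˢ range qps).filter
            (fun y => p*x.1 + q*x.2 = p*y.1 + q*y.2) :=
          Finset.mem_filter.mpr ⟨Finset.mem_product.mpr
            ⟨Finset.mem_range.mpr hx.1, Finset.mem_range.mpr hx.2⟩, rfl⟩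
        have h1 : 1 ≤ ((range pqs ×ˢ range qps).filter
            (fun y => p*x.1 + q*x.2 = p*y.1 + q*y.2)).card :=
          Finset.card_pos.mpr ⟨x, hmem⟩
        have h1' := hn1 (p*x.1 + q*x.2)
        have h2 := hdisj (p*x.1 + q*x.2)
        refine ⟨Nat.lt_succ_of_le (htot ▸ hb1 x.1 x.2 hx.1 hx.2), ?_⟩
        rw [hcoeff]
        omega
    rw [himg1, Finset.card_image_of_injOn, Finset.card_product,
      Finset.card_range, Finset.card_range]
    intro a ha b hb h
    simp only [Finset.coe_product, Set.mem_prod, Finset.mem_coe, Finset.mem_range] at ha hb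
    have := inj a.1 a.2 b.1 b.2 (ha.1.trans hpqs2) (hb.1.trans hpqs2) h
    exact Prod.ext this.1 this.2
  · have himg2 : (Finset.range (Nat.totient (p*q) + 1)).filter
        (fun m => (cyclotomic (p*q) ℤ).coeff m = -1)
        = (Ico pqs q ×ˢ Ico qps p).image (fun x => p*x.1 + q*x.2 - p*q) := by
      ext m
      simp only [Finset.mem_filter, Finset.mem_range, Finset.mem_image]
      constructor
      · rintro ⟨hm, hc⟩
        rw [hcoeff m] at hc
        have h1 := hn1 m; have h2 := hn2 m
        obtain ⟨x, hx⟩ := Finset.card_pos.mp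
          (show 0 < ((Ico pqs q ×ˢ Ico qps p).filter
            (fun x => m = p*x.1 + q*x.2 - p*q)).card by omega)
        rw [Finset.mem_filter] at hx
        exact ⟨x, hx.1, hx.2.symm⟩
      · rintro ⟨x, hx, rfl⟩
        rw [Finset.mem_product, Finset.mem_Ico, Finset.mem_Ico] at hx
        have hmem : x ∈ (Ico pqs q ×ˢ Ico qps p).filter
            (fun y => p*x.1 + q*x.2 - p*q = p*y.1 + q*y.2 - p*q) :=
          Finset.mem_filter.mpr ⟨Finset.mem_product.mpr
            ⟨Finset.mem_Ico.mpr hx.1, Finset.mem_Ico.mpr hx.2⟩, rfl⟩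
        have h2 : 1 ≤ ((Ico pqs q ×ˢ Ico qps p).filter
            (fun y => p*x.1 + q*x.2 - p*q = p*y.1 + q*y.2 - p*q)).card :=
          Finset.card_pos.mpr ⟨x, hmem⟩
        have h2' := hn2 (p*x.1 + q*x.2 - p*q)
        have h1 := hdisj (p*x.1 + q*x.2 - p*q)
        refine ⟨Nat.lt_succ_of_le (htot ▸ hb2 x.1 x.2 hx.1.2 hx.2.2), ?_⟩
        rw [hcoeff]
        omega
    rw [himg2, Finset.card_image_of_injOn, Finset.card_product,
      Nat.card_Ico, Nat.card_Ico]
    intro a ha b hb h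
    simp only [Finset.coe_product, Set.mem_prod, Finset.mem_coe, Finset.mem_Ico] at ha hb
    have hgea := hge2 a.1 a.2 ha.1.1 ha.2.1
    have hgeb := hge2 b.1 b.2 hb.1.1 hb.2.1
    have h' : p*a.1 + q*a.2 - p*q = p*b.1 + q*b.2 - p*q := h
    have heq : p*a.1 + q*a.2 = p*b.1 + q*b.2 := by
      have h2 : p*a.1 + q*a.2 - p*q + p*q = p*b.1 + q*b.2 - p*q + p*q := by rw [h']
      rwa [Nat.sub_add_cancel (Nat.le_of_succ_le hgea),
        Nat.sub_add_cancel (Nat.le_of_succ_le hgeb)] at h2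
    have := inj a.1 a.2 b.1 b.2 ha.1.2 hb.1.2 heq
    exact Prod.ext this.1 this.2
  · have hkeyz : (p:ℤ)*pqs + q*qps = p*q + 1 := by exact_mod_cast hkey
    zify [hpqs2.le, hqps2.le]
    linear_combination hkeyz
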